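/- arXiv:2105.02665 — 3 statements merged into one kernel-verified Lean document; each statement's English description precedes it below -/
import Mathlib

section
/- Let φ ∈ L¹(ℝ³) satisfy the hypotheses of the mollifier lemma: φ^(0)=1, φ^(ξ)≠1 for ξ≠0, and 1-φ^(ξ) ~ K‖ξ‖^s as ξ→0 with K,s>0. With m_α = min_{‖ξ‖=1}|1-φ^(αξ)|² and M_α = max_{‖ξ‖=1}|1-φ^(αξ)|², one has sup_{α>0} M_α/m_α < ∞. -/
open MeasureTheory Real Filter Topology
open scoped FourierTransform

theorem stmt_4 (φ : EuclideanSpace ℝ (Fin 3) → ℂ) (hφ : Integrable φ)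
    (K s : ℝ) (hK : 0 < K) (hs : 0 < s)
    (h0 : 𝓕 φ 0 = 1)
    (hne : ∀ ξ : EuclideanSpace ℝ (Fin 3), ξ ≠ 0 → 𝓕 φ ξ ≠ 1)
    (hasymp : Tendsto (fun ξ : EuclideanSpace ℝ (Fin 3) =>
      (1 - 𝓕 φ ξ) / ((K * ‖ξ‖ ^ s : ℝ) : ℂ)) (𝓝[≠] 0) (𝓝 1))
    (m M : ℝ → ℝ)
    (hm : ∀ α : ℝ, 0 < α → IsLeast {y : ℝ | ∃ ξ : EuclideanSpace ℝ (Fin 3),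
      ‖ξ‖ = 1 ∧ y = ‖1 - 𝓕 φ (α • ξ)‖ ^ 2} (m α))
    (hM : ∀ α : ℝ, 0 < α → IsGreatest {y : ℝ | ∃ ξ : EuclideanSpace ℝ (Fin 3),
      ‖ξ‖ = 1 ∧ y = ‖1 - 𝓕 φ (α • ξ)‖ ^ 2} (M α)) :
    ∃ C : ℝ, ∀ α : ℝ, 0 < α → M α / m α ≤ C := by
  -- continuity of the Fourier transform
  have hcont : Continuous (𝓕 φ) :=
    VectorFourier.fourierIntegral_continuous Real.continuous_fourierChar
      (by exact continuous_inner) hφ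
  -- positivity of m
  have hmpos : ∀ α : ℝ, 0 < α → 0 < m α := by
    intro α hα
    obtain ⟨ξ, hξ, hy⟩ := (hm α hα).1
    have hξ0 : (α : ℝ) • ξ ≠ 0 := by
      apply smul_ne_zero hα.ne'
      intro h; rw [h, norm_zero] at hξ; norm_num at hξ
    have hne1 := hne _ hξ0
    have h1 : (0:ℝ) < ‖1 - 𝓕 φ (α • ξ)‖ := by
      rw [norm_pos_iff, sub_ne_zero]; exact fun h => hne1 h.symm
    rw [hy]; positivity
  -- norm of α • ξ for unit ξ
  have hnorm : ∀ (α : ℝ), 0 < α → ∀ ξ : EuclideanSpace ℝ (Fin 3), ‖ξ‖ = 1 → ‖α • ξ‖ = α := by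
    intro α hα ξ hξ
    rw [norm_smul, hξ, mul_one, Real.norm_eq_abs, abs_of_pos hα]
  -- Step 1: small frequencies
  obtain ⟨ε, hε, hsmall⟩ : ∃ ε > 0, ∀ ξ : EuclideanSpace ℝ (Fin 3), ξ ≠ 0 → ‖ξ‖ < ε →
      K * ‖ξ‖ ^ s / 2 ≤ ‖1 - 𝓕 φ ξ‖ ∧ ‖1 - 𝓕 φ ξ‖ ≤ 3 * (K * ‖ξ‖ ^ s) / 2 := by
    have h := Metric.tendsto_nhds.mp hasymp (1/2) (by norm_num)
    obtain ⟨δ, hδ, hd⟩ := Metric.mem_nhdsWithin_iff.mp h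
    refine ⟨δ, hδ, fun ξ hξ0 hξδ => ?_⟩
    have hdist : dist ((1 - 𝓕 φ ξ) / ((K * ‖ξ‖ ^ s : ℝ) : ℂ)) 1 < 1/2 :=
      hd ⟨by rwa [Metric.mem_ball, dist_zero_right], hξ0⟩
    set r : ℝ := K * ‖ξ‖ ^ s with hr
    have hrpos : 0 < r := by
      have : (0:ℝ) < ‖ξ‖ := norm_pos_iff.mpr hξ0
      positivity
    set a : ℂ := (1 - 𝓕 φ ξ) with ha
    have hnorm_div : ‖a / (r : ℂ)‖ = ‖a‖ / r := by
      rw [norm_div, Complex.norm_real, Real.norm_eq_abs, abs_of_pos hrpos]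
    have h1 : |‖a / (r:ℂ)‖ - 1| < 1/2 := by
      calc |‖a / (r:ℂ)‖ - 1| = |‖a / (r:ℂ)‖ - ‖(1:ℂ)‖| := by norm_num
        _ ≤ ‖a / (r:ℂ) - 1‖ := abs_norm_sub_norm_le _ _
        _ < 1/2 := by rwa [dist_eq_norm] at hdist
    rw [hnorm_div, abs_lt] at h1
    constructor
    · have h2 : 1/2 ≤ ‖a‖ / r := by linarith [h1.1]
      calc r / 2 = r * (1/2) := by ring
        _ ≤ r * (‖a‖ / r) := by nlinarith
        _ = ‖a‖ := by field_simp
    · have h2 : ‖a‖ / r ≤ 3/2 := by linarith [h1.2]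
      calc ‖a‖ = r * (‖a‖ / r) := by field_simp
        _ ≤ r * (3/2) := by nlinarith
        _ = 3 * r / 2 := by ring
  -- Step 2: large frequencies (Riemann–Lebesgue)
  obtain ⟨R, hRbig⟩ : ∃ R : ℝ, ∀ ξ : EuclideanSpace ℝ (Fin 3), R ≤ ‖ξ‖ → ‖𝓕 φ ξ‖ ≤ 1/2 := by
    have hRL : Tendsto (𝓕 φ) (Filter.cocompact (EuclideanSpace ℝ (Fin 3))) (𝓝 0) :=
      tendsto_integral_exp_inner_smul_cocompact φ
    have h := Metric.tendsto_nhds.mp hRL (1/2) (by norm_num)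
    obtain ⟨t, htc, hts⟩ := Filter.mem_cocompact.mp h
    obtain ⟨r, hr⟩ := htc.isBounded.subset_closedBall 0
    refine ⟨r + 1, fun ξ hξ => ?_⟩
    have hξt : ξ ∉ t := by
      intro hmem
      have := hr hmem
      rw [Metric.mem_closedBall, dist_zero_right] at this
      linarith
    have := hts hξt
    simp only [Set.mem_setOf_eq, dist_zero_right] at this
    linarith
  -- the compact annulus and extrema of g there
  set Rb : ℝ := max R ε with hRb
  set g : EuclideanSpace ℝ (Fin 3) → ℝ := fun x => ‖1 - 𝓕 φ x‖ ^ 2 with hg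
  have hgc : Continuous g := by fun_prop
  set S : Set (EuclideanSpace ℝ (Fin 3)) := Metric.closedBall 0 Rb \ Metric.ball 0 ε with hS
  have hScompact : IsCompact S := (isCompact_closedBall 0 Rb).diff Metric.isOpen_ball
  have hSne : S.Nonempty := by
    refine ⟨ε • (EuclideanSpace.single (0 : Fin 3) (1:ℝ)), ?_, ?_⟩
    · rw [Metric.mem_closedBall, dist_zero_right, norm_smul, EuclideanSpace.norm_single]
      rw [Real.norm_eq_abs, Real.norm_eq_abs, abs_of_pos hε, abs_one, mul_one]
      exact le_max_right R ε
    · rw [Metric.mem_ball, dist_zero_right, norm_smul, EuclideanSpace.norm_single]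
      simp [abs_of_pos hε]
  obtain ⟨xc, hxcS, hxc⟩ := hScompact.exists_isMinOn hSne hgc.continuousOn
  obtain ⟨xC, hxCS, hxC⟩ := hScompact.exists_isMaxOn hSne hgc.continuousOn
  have hcpos : 0 < g xc := by
    have hxc0 : xc ≠ 0 := by
      intro h
      have := hxcS.2
      rw [h] at this
      exact this (Metric.mem_ball_self hε)
    have hne1 := hne _ hxc0
    have h1 : (0:ℝ) < ‖1 - 𝓕 φ xc‖ := by
      rw [norm_pos_iff, sub_ne_zero]; exact fun h => hne1 h.symm
    simp only [hg]; positivity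
  refine ⟨max 9 (g xC / g xc), fun α hα => ?_⟩
  have hmα := hm α hα
  have hMα := hM α hα
  have hm0 := hmpos α hα
  rw [div_le_iff₀ hm0]
  have h9 : (9:ℝ) ≤ max 9 (g xC / g xc) := le_max_left _ _
  obtain ⟨ξM, hξM, hMy⟩ := hMα.1
  obtain ⟨ξm, hξm, hmy⟩ := hmα.1
  have hξM0 : (α : ℝ) • ξM ≠ 0 := by
    apply smul_ne_zero hα.ne'
    intro h; rw [h, norm_zero] at hξM; norm_num at hξM
  have hnM : ‖α • ξM‖ = α := hnorm α hα ξM hξM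
  have hnm : ‖α • ξm‖ = α := hnorm α hα ξm hξm
  rcases lt_or_ge α ε with hcase | hcase
  · -- small α
    set r : ℝ := K * α ^ s with hr
    have hrpos : 0 < r := by positivity
    have hup : ‖1 - 𝓕 φ (α • ξM)‖ ≤ 3 * r / 2 := by
      have := (hsmall _ hξM0 (by rwa [hnM])).2
      rwa [hnM] at this
    have hlo : r / 2 ≤ ‖1 - 𝓕 φ (α • ξm)‖ := by
      have hξm0 : (α : ℝ) • ξm ≠ 0 := by
        apply smul_ne_zero hα.ne'
        intro h; rw [h, norm_zero] at hξm; norm_num at hξm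
      have := (hsmall _ hξm0 (by rwa [hnm])).1
      rwa [hnm] at this
    have hM9 : M α ≤ 9 * m α := by
      rw [hMy, hmy]
      nlinarith [norm_nonneg (1 - 𝓕 φ (α • ξM)), norm_nonneg (1 - 𝓕 φ (α • ξm))]
    calc M α ≤ 9 * m α := hM9
      _ ≤ max 9 (g xC / g xc) * m α := mul_le_mul_of_nonneg_right h9 hm0.le
  · rcases le_or_gt Rb α with hcase2 | hcase2
    · -- large α
      have hup : ‖1 - 𝓕 φ (α • ξM)‖ ≤ 3/2 := by
        have h1 : ‖𝓕 φ (α • ξM)‖ ≤ 1/2 :=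
          hRbig _ (by rw [hnM]; exact le_trans (le_max_left _ _) hcase2)
        calc ‖1 - 𝓕 φ (α • ξM)‖ ≤ ‖(1:ℂ)‖ + ‖𝓕 φ (α • ξM)‖ := norm_sub_le _ _
          _ ≤ 1 + 1/2 := by rw [norm_one]; linarith
          _ = 3/2 := by norm_num
      have hlo : 1/2 ≤ ‖1 - 𝓕 φ (α • ξm)‖ := by
        have h1 : ‖𝓕 φ (α • ξm)‖ ≤ 1/2 :=
          hRbig _ (by rw [hnm]; exact le_trans (le_max_left _ _) hcase2)
        have h2 : ‖(1:ℂ)‖ - ‖𝓕 φ (α • ξm)‖ ≤ ‖1 - 𝓕 φ (α • ξm)‖ := norm_sub_norm_le _ _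
        rw [norm_one] at h2
        linarith
      have hM9 : M α ≤ 9 * m α := by
        rw [hMy, hmy]
        nlinarith [norm_nonneg (1 - 𝓕 φ (α • ξM)), norm_nonneg (1 - 𝓕 φ (α • ξm))]
      calc M α ≤ 9 * m α := hM9
        _ ≤ max 9 (g xC / g xc) * m α := mul_le_mul_of_nonneg_right h9 hm0.le
    · -- middle α : ε ≤ α < Rb
      have hmemM : (α • ξM : EuclideanSpace ℝ (Fin 3)) ∈ S := by
        constructor
        · rw [Metric.mem_closedBall, dist_zero_right, hnM]; exact hcase2.le
        · rw [Metric.mem_ball, dist_zero_right, hnM]; exact not_lt.mpr hcase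
      have hmemm : (α • ξm : EuclideanSpace ℝ (Fin 3)) ∈ S := by
        constructor
        · rw [Metric.mem_closedBall, dist_zero_right, hnm]; exact hcase2.le
        · rw [Metric.mem_ball, dist_zero_right, hnm]; exact not_lt.mpr hcase
      have hMup : M α ≤ g xC := by rw [hMy]; exact hxC hmemM
      have hmlo : g xc ≤ m α := by rw [hmy]; exact hxc hmemm
      have hrat : g xC / g xc ≤ max 9 (g xC / g xc) := le_max_right _ _
      have hdiv : 0 ≤ g xC / g xc := div_nonneg (le_trans hcpos.le (hxc hmemM |>.trans (hxC hmemM))) hcpos.le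
      calc M α ≤ g xC := hMup
        _ = (g xC / g xc) * g xc := (div_mul_cancel₀ _ hcpos.ne').symm
        _ ≤ (g xC / g xc) * m α := mul_le_mul_of_nonneg_left hmlo hdiv
        _ ≤ max 9 (g xC / g xc) * m α := mul_le_mul_of_nonneg_right hrat hm0.le
end

section
/- Let s₀ ≥ 0 and s > 0 with s as in the mollifier hypotheses. If u ∈ H^{s₀+s}(ℝ³), then ‖(I - C_α)u‖²_{H^{s₀}(ℝ³)} ≤ μ₀ M_α ‖u‖²_{H^{s₀+s}(ℝ³)}, where μ₀ is the constant in the upper bound |1-φ^(αξ)|²/|1-φ^(αξ/‖ξ‖)|² ≤ μ₀‖ξ‖^{2s} and M_α = max_{‖ξ‖=1}|1-φ^(αξ)|². -/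
open MeasureTheory Real Filter Topology
open scoped FourierTransform

section AuxLemmas
open scoped RealInnerProductSpace

private lemma aux_scale (φ : EuclideanSpace ℝ (Fin 3) → ℂ) {α : ℝ} (hα : 0 < α)
    (ξ : EuclideanSpace ℝ (Fin 3)) :
    𝓕 (fun y => ((α : ℂ) ^ 3)⁻¹ * φ (α⁻¹ • y)) ξ = 𝓕 φ (α • ξ) := by
  have h3 : Module.finrank ℝ (EuclideanSpace ℝ (Fin 3)) = 3 := by
    simp [finrank_euclideanSpace]
  rw [Real.fourier_eq, Real.fourier_eq]
  have key : ∀ y : EuclideanSpace ℝ (Fin 3),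
      𝐞 (-⟪y, ξ⟫) • (((α : ℂ) ^ 3)⁻¹ * φ (α⁻¹ • y)) =
      ((α : ℂ) ^ 3)⁻¹ * ((fun z => 𝐞 (-⟪z, α • ξ⟫) • φ z) (α⁻¹ • y)) := by
    intro y
    have hin : ⟪α⁻¹ • y, α • ξ⟫ = ⟪y, ξ⟫ := by
      rw [real_inner_smul_left, real_inner_smul_right, ← mul_assoc,
        inv_mul_cancel₀ hα.ne', one_mul]
    simp only [hin, Circle.smul_def, smul_eq_mul]
    ring
  simp_rw [key, integral_const_mul]
  rw [MeasureTheory.Measure.integral_comp_inv_smul_of_nonneg volume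
    (fun z => 𝐞 (-⟪z, α • ξ⟫) • φ z) hα.le, h3, ← Complex.coe_smul, smul_eq_mul]
  push_cast
  rw [inv_mul_cancel_left₀ (pow_ne_zero 3 (Complex.ofReal_ne_zero.2 hα.ne'))]

private lemma aux_conv (f u : EuclideanSpace ℝ (Fin 3) → ℂ)
    (hf : Integrable f) (hu : Integrable u) (ξ : EuclideanSpace ℝ (Fin 3)) :
    𝓕 (fun x => ∫ y, f y * u (x - y)) ξ = 𝓕 f ξ * 𝓕 u ξ := by
  have hprod : Integrable
      (fun p : EuclideanSpace ℝ (Fin 3) × EuclideanSpace ℝ (Fin 3) =>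
        f p.2 * u (p.1 - p.2)) (volume.prod volume) := by
    simpa using hf.convolution_integrand (ContinuousLinearMap.mul ℂ ℂ) hu
  have hc : Continuous fun p : EuclideanSpace ℝ (Fin 3) × EuclideanSpace ℝ (Fin 3) =>
      ((𝐞 (-⟪p.1, ξ⟫) : Circle) : ℂ) :=
    continuous_subtype_val.comp (Real.continuous_fourierChar.comp
      ((continuous_fst.inner continuous_const).neg))
  have hH : Integrable
      (fun p : EuclideanSpace ℝ (Fin 3) × EuclideanSpace ℝ (Fin 3) =>
        ((𝐞 (-⟪p.1, ξ⟫) : Circle) : ℂ) * (f p.2 * u (p.1 - p.2))) (volume.prod volume) :=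
    hprod.bdd_mul (c := 1) hc.aestronglyMeasurable (ae_of_all _ fun p => (Circle.norm_coe _).le)
  have inner_step : ∀ y : EuclideanSpace ℝ (Fin 3),
      (∫ x, ((𝐞 (-⟪x, ξ⟫) : Circle) : ℂ) * (f y * u (x - y))) =
        ((𝐞 (-⟪y, ξ⟫) : Circle) : ℂ) * f y * 𝓕 u ξ := by
    intro y
    have h1 : ∀ x : EuclideanSpace ℝ (Fin 3),
        ((𝐞 (-⟪x + y, ξ⟫) : Circle) : ℂ) * (f y * u (x + y - y)) =
          ((𝐞 (-⟪y, ξ⟫) : Circle) : ℂ) * f y * (((𝐞 (-⟪x, ξ⟫) : Circle) : ℂ) * u x) := by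
      intro x
      rw [add_sub_cancel_right, inner_add_left, neg_add, AddChar.map_add_eq_mul]
      push_cast
      ring
    rw [← MeasureTheory.integral_add_right_eq_self
      (fun x => ((𝐞 (-⟪x, ξ⟫) : Circle) : ℂ) * (f y * u (x - y))) y]
    simp_rw [h1, integral_const_mul]
    rw [Real.fourier_eq]
    simp_rw [Circle.smul_def, smul_eq_mul]
  rw [Real.fourier_eq]
  simp_rw [Circle.smul_def, smul_eq_mul, ← integral_const_mul]
  rw [MeasureTheory.integral_integral_swap hH]
  simp_rw [inner_step]
  rw [integral_mul_const]
  simp_rw [Real.fourier_eq, Circle.smul_def, smul_eq_mul]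

end AuxLemmas

theorem stmt_8 (φ : EuclideanSpace ℝ (Fin 3) → ℂ) (hφ : Integrable φ)
    (K s : ℝ) (hK : 0 < K) (hs : 0 < s)
    (h0 : 𝓕 φ 0 = 1)
    (hne : ∀ ξ : EuclideanSpace ℝ (Fin 3), ξ ≠ 0 → 𝓕 φ ξ ≠ 1)
    (hasymp : Tendsto (fun ξ : EuclideanSpace ℝ (Fin 3) =>
      (1 - 𝓕 φ ξ) / ((K * ‖ξ‖ ^ s : ℝ) : ℂ)) (𝓝[≠] 0) (𝓝 1))
    (M : ℝ → ℝ)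
    (hM : ∀ α : ℝ, 0 < α → IsGreatest {y : ℝ | ∃ ξ : EuclideanSpace ℝ (Fin 3),
      ‖ξ‖ = 1 ∧ y = ‖1 - 𝓕 φ (α • ξ)‖ ^ 2} (M α))
    (μ₀ : ℝ) (hμ₀ : 0 < μ₀)
    -- μ₀ is the constant from the pointwise upper bound of the key lemma
    (hμ : ∀ α : ℝ, α ∈ Set.Ioc (0 : ℝ) 1 → ∀ ξ : EuclideanSpace ℝ (Fin 3), ξ ≠ 0 →
      ‖1 - 𝓕 φ (α • ξ)‖ ^ 2 / ‖1 - 𝓕 φ (α • (‖ξ‖⁻¹ • ξ))‖ ^ 2 ≤ μ₀ * ‖ξ‖ ^ (2 * s))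
    (α : ℝ) (hα : α ∈ Set.Ioc (0 : ℝ) 1)
    (s₀ : ℝ) (hs₀ : 0 ≤ s₀)
    (u : EuclideanSpace ℝ (Fin 3) → ℂ) (hu1 : Integrable u)
    -- u belongs to H^{s₀+s}(ℝ³) (Sobolev norm defined via the Fourier transform)
    (hu2 : Integrable (fun ξ : EuclideanSpace ℝ (Fin 3) =>
      (1 + ‖ξ‖ ^ 2) ^ (s₀ + s) * ‖𝓕 u ξ‖ ^ 2)) :
    ∫ ξ : EuclideanSpace ℝ (Fin 3), (1 + ‖ξ‖ ^ 2) ^ s₀ *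
        ‖𝓕 (fun x => u x - ∫ y, ((α : ℂ) ^ 3)⁻¹ * φ (α⁻¹ • y) * u (x - y)) ξ‖ ^ 2 ≤
      μ₀ * M α * ∫ ξ : EuclideanSpace ℝ (Fin 3),
        (1 + ‖ξ‖ ^ 2) ^ (s₀ + s) * ‖𝓕 u ξ‖ ^ 2 := by
  obtain ⟨hα0, hα1⟩ := hα
  have hMnn : 0 ≤ M α := by
    obtain ⟨⟨ζ, hζ, hy⟩, -⟩ := hM α hα0
    rw [hy]; positivity
  -- integrability of the mollification
  have hφs : Integrable (fun y : EuclideanSpace ℝ (Fin 3) => φ (α⁻¹ • y)) :=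
    hφ.comp_smul (inv_ne_zero hα0.ne')
  have hfα : Integrable (fun y : EuclideanSpace ℝ (Fin 3) =>
      ((α : ℂ) ^ 3)⁻¹ * φ (α⁻¹ • y)) := hφs.const_mul _
  have hg : Integrable (fun x : EuclideanSpace ℝ (Fin 3) =>
      ∫ y, ((α : ℂ) ^ 3)⁻¹ * φ (α⁻¹ • y) * u (x - y)) := by
    have := hfα.integrable_convolution (L := ContinuousLinearMap.mul ℂ ℂ) (μ := volume) hu1
    exact this
  -- the key Fourier identity
  have hFT : ∀ ξ : EuclideanSpace ℝ (Fin 3),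
      𝓕 (fun x => u x - ∫ y, ((α : ℂ) ^ 3)⁻¹ * φ (α⁻¹ • y) * u (x - y)) ξ
        = (1 - 𝓕 φ (α • ξ)) * 𝓕 u ξ := by
    intro ξ
    have hsub : 𝓕 (fun x => u x - ∫ y, ((α : ℂ) ^ 3)⁻¹ * φ (α⁻¹ • y) * u (x - y)) ξ
        = 𝓕 u ξ - 𝓕 (fun x => ∫ y, ((α : ℂ) ^ 3)⁻¹ * φ (α⁻¹ • y) * u (x - y)) ξ := by
      simp_rw [Real.fourier_eq, smul_sub]
      rw [integral_sub ((Real.fourierIntegral_convergent_iff ξ).2 hu1)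
        ((Real.fourierIntegral_convergent_iff ξ).2 hg)]
    rw [hsub, aux_conv _ _ hfα hu1, aux_scale φ hα0, one_sub_mul]
  -- the pointwise bound
  have hpt : ∀ ξ : EuclideanSpace ℝ (Fin 3),
      (1 + ‖ξ‖ ^ 2) ^ s₀ * ‖(1 - 𝓕 φ (α • ξ)) * 𝓕 u ξ‖ ^ 2
        ≤ μ₀ * M α * ((1 + ‖ξ‖ ^ 2) ^ (s₀ + s) * ‖𝓕 u ξ‖ ^ 2) := by
    intro ξ
    rcases eq_or_ne ξ 0 with rfl | hξ
    · have : (1 - 𝓕 φ (α • (0 : EuclideanSpace ℝ (Fin 3)))) = 0 := by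
        rw [smul_zero, h0, sub_self]
      rw [this, zero_mul]
      have : (0:ℝ) ≤ μ₀ * M α * ((1 + ‖(0 : EuclideanSpace ℝ (Fin 3))‖ ^ 2) ^ (s₀ + s)
          * ‖𝓕 u 0‖ ^ 2) := by
        have h1 : (0:ℝ) ≤ (1 + ‖(0 : EuclideanSpace ℝ (Fin 3))‖ ^ 2) ^ (s₀ + s)
            * ‖𝓕 u 0‖ ^ 2 := by positivity
        exact mul_nonneg (mul_nonneg hμ₀.le hMnn) h1
      simpa using this
    · set n : EuclideanSpace ℝ (Fin 3) := ‖ξ‖⁻¹ • ξ with hn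
      have hξn : ‖ξ‖ ≠ 0 := norm_ne_zero_iff.2 hξ
      have hnnorm : ‖n‖ = 1 := by
        rw [hn, norm_smul, norm_inv, norm_norm, inv_mul_cancel₀ hξn]
      have hn0 : n ≠ 0 := by
        intro h; rw [h, norm_zero] at hnnorm; exact one_ne_zero hnnorm.symm
      have hd : 0 < ‖1 - 𝓕 φ (α • n)‖ ^ 2 := by
        have hαn : α • n ≠ 0 := smul_ne_zero hα0.ne' hn0
        have h2 : 1 - 𝓕 φ (α • n) ≠ 0 := sub_ne_zero.2 (Ne.symm (hne _ hαn))
        exact pow_pos (norm_pos_iff.2 h2) 2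
      have h1 := hμ α ⟨hα0, hα1⟩ ξ hξ
      rw [div_le_iff₀ hd] at h1
      have hdM : ‖1 - 𝓕 φ (α • n)‖ ^ 2 ≤ M α := (hM α hα0).2 ⟨n, hnnorm, rfl⟩
      have hN : ‖1 - 𝓕 φ (α • ξ)‖ ^ 2 ≤ μ₀ * ‖ξ‖ ^ (2 * s) * M α := by
        refine h1.trans ?_
        have hc : (0:ℝ) ≤ μ₀ * ‖ξ‖ ^ (2 * s) := by positivity
        exact mul_le_mul_of_nonneg_left hdM hc
      have hkey : ‖ξ‖ ^ (2 * s) * (1 + ‖ξ‖ ^ 2) ^ s₀ ≤ (1 + ‖ξ‖ ^ 2) ^ (s₀ + s) := by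
        have h2 : ‖ξ‖ ^ (2 * s) ≤ (1 + ‖ξ‖ ^ 2) ^ s := by
          have he : ‖ξ‖ ^ (2 * s) = ((‖ξ‖ ^ 2 : ℝ)) ^ s := by
            rw [← Real.rpow_natCast ‖ξ‖ 2, ← Real.rpow_mul (norm_nonneg _)]
            norm_num
          rw [he]
          exact Real.rpow_le_rpow (by positivity) (by nlinarith [sq_nonneg ‖ξ‖]) hs.le
        rw [Real.rpow_add (by positivity : (0:ℝ) < 1 + ‖ξ‖ ^ 2), mul_comm
          ((1 + ‖ξ‖ ^ 2) ^ s₀)]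
        exact mul_le_mul_of_nonneg_right h2 (by positivity)
      have hA : (0:ℝ) ≤ (1 + ‖ξ‖ ^ 2) ^ s₀ := by positivity
      have hB : (0:ℝ) ≤ ‖𝓕 u ξ‖ ^ 2 := by positivity
      calc (1 + ‖ξ‖ ^ 2) ^ s₀ * ‖(1 - 𝓕 φ (α • ξ)) * 𝓕 u ξ‖ ^ 2
          = (1 + ‖ξ‖ ^ 2) ^ s₀ * (‖1 - 𝓕 φ (α • ξ)‖ ^ 2 * ‖𝓕 u ξ‖ ^ 2) := by
            rw [norm_mul, mul_pow]
        _ ≤ (1 + ‖ξ‖ ^ 2) ^ s₀ * ((μ₀ * ‖ξ‖ ^ (2 * s) * M α) * ‖𝓕 u ξ‖ ^ 2) := by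
            exact mul_le_mul_of_nonneg_left
              (mul_le_mul_of_nonneg_right hN hB) hA
        _ = μ₀ * M α * (‖ξ‖ ^ (2 * s) * (1 + ‖ξ‖ ^ 2) ^ s₀ * ‖𝓕 u ξ‖ ^ 2) := by ring
        _ ≤ μ₀ * M α * ((1 + ‖ξ‖ ^ 2) ^ (s₀ + s) * ‖𝓕 u ξ‖ ^ 2) := by
            exact mul_le_mul_of_nonneg_left
              (mul_le_mul_of_nonneg_right hkey hB)
              (mul_nonneg hμ₀.le hMnn)
  calc ∫ ξ : EuclideanSpace ℝ (Fin 3), (1 + ‖ξ‖ ^ 2) ^ s₀ *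
        ‖𝓕 (fun x => u x - ∫ y, ((α : ℂ) ^ 3)⁻¹ * φ (α⁻¹ • y) * u (x - y)) ξ‖ ^ 2
      = ∫ ξ : EuclideanSpace ℝ (Fin 3), (1 + ‖ξ‖ ^ 2) ^ s₀ *
          ‖(1 - 𝓕 φ (α • ξ)) * 𝓕 u ξ‖ ^ 2 := by simp_rw [hFT]
    _ ≤ ∫ ξ : EuclideanSpace ℝ (Fin 3),
          μ₀ * M α * ((1 + ‖ξ‖ ^ 2) ^ (s₀ + s) * ‖𝓕 u ξ‖ ^ 2) :=
        integral_mono_of_nonneg (ae_of_all _ fun ξ => by positivity)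
          (hu2.const_mul _) (ae_of_all _ hpt)
    _ = μ₀ * M α * ∫ ξ : EuclideanSpace ℝ (Fin 3),
          (1 + ‖ξ‖ ^ 2) ^ (s₀ + s) * ‖𝓕 u ξ‖ ^ 2 := integral_const_mul _ _
end

section
/- Suppose u† ∈ H^{2+s}(ℝ³) for some s > 0, E is an extension operator bounded from H²(V) to H²(ℝ³) and from H^{2+s}(V) to H^{2+s}(ℝ³), and u_α minimizes J_α(u) = ‖v - Tu‖²_G + ‖(I-C_α)Eu‖²_{H²(ℝ³)} with v = T(u†|_V). Then ‖u_α‖²_{H²(V)} ≤ (μ₀/A₀)(M_α/m_α) ‖E(u†|_V)‖²_{H^{2+s}(ℝ³)}; in particular, since sup_α M_α/m_α < ∞, the family (u_α)_{α∈(0,1]} is bounded in H²(V). -/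
/-- Abstract formulation: `X` plays the role of `H²(V)`, `Y` the role of `H²(ℝ³)`,
`E : X → Y` is the extension operator, `C α` is the mollification operator `C_α`
(acting on `H²(ℝ³)`), `Ns` is the `H^{2+s}(ℝ³)` norm of `E (u†|_V)`, and
`A₀, μ₀, m, M` are the constants of the mollifier lemma. -/
theorem stmt_15 {X Y G : Type*}
    [NormedAddCommGroup X] [InnerProductSpace ℝ X]
    [NormedAddCommGroup Y] [InnerProductSpace ℝ Y]
    [NormedAddCommGroup G] [InnerProductSpace ℝ G]
    (T : X →L[ℝ] G) (E : X →L[ℝ] Y) (C : ℝ → (Y →L[ℝ] Y))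
    (m M : ℝ → ℝ) (A₀ μ₀ : ℝ) (hA₀ : 0 < A₀) (hμ₀ : 0 < μ₀)
    (hmpos : ∀ α ∈ Set.Ioc (0 : ℝ) 1, 0 < m α)
    -- ‖u‖_{H²(V)} ≤ ‖Eu‖_{H²(ℝ³)}
    (hE : ∀ u : X, ‖u‖ ≤ ‖E u‖)
    -- A₀ m_α ‖w‖²_{H²} ≤ ‖(I - C_α) w‖²_{H²} for all w ∈ H²(ℝ³)
    (hlow : ∀ α ∈ Set.Ioc (0 : ℝ) 1, ∀ w : Y, A₀ * m α * ‖w‖ ^ 2 ≤ ‖w - C α w‖ ^ 2)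
    (udag : X) (Ns : ℝ) (hNs : 0 ≤ Ns)
    -- ‖(I - C_α) E u†‖²_{H²} ≤ μ₀ M_α ‖E u†‖²_{H^{2+s}}  (u† ∈ H^{2+s})
    (hup : ∀ α ∈ Set.Ioc (0 : ℝ) 1, ‖E udag - C α (E udag)‖ ^ 2 ≤ μ₀ * M α * Ns ^ 2)
    (v : G) (hv : v = T udag)
    (uα : ℝ → X)
    -- u_α minimizes J_α(u) = ‖v - Tu‖² + ‖(I - C_α) E u‖²
    (hmin : ∀ α ∈ Set.Ioc (0 : ℝ) 1, ∀ u : X,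
      ‖v - T (uα α)‖ ^ 2 + ‖E (uα α) - C α (E (uα α))‖ ^ 2 ≤
        ‖v - T u‖ ^ 2 + ‖E u - C α (E u)‖ ^ 2)
    -- sup_α M_α / m_α < ∞
    (hratio : ∃ Cr : ℝ, ∀ α ∈ Set.Ioc (0 : ℝ) 1, M α / m α ≤ Cr) :
    (∀ α ∈ Set.Ioc (0 : ℝ) 1,
      ‖uα α‖ ^ 2 ≤ (μ₀ / A₀) * (M α / m α) * Ns ^ 2) ∧
    ∃ B : ℝ, ∀ α ∈ Set.Ioc (0 : ℝ) 1, ‖uα α‖ ≤ B := by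

  have key : ∀ α ∈ Set.Ioc (0 : ℝ) 1,
      ‖uα α‖ ^ 2 ≤ (μ₀ / A₀) * (M α / m α) * Ns ^ 2 := by
    intro α hα
    have hm := hmpos α hα
    have h1 : ‖E (uα α) - C α (E (uα α))‖ ^ 2 ≤ μ₀ * M α * Ns ^ 2 := by
      have := hmin α hα udag
      have hz : ‖v - T udag‖ ^ 2 = 0 := by rw [hv]; simp
      nlinarith [sq_nonneg ‖v - T (uα α)‖, hup α hα]
    have h2 : A₀ * m α * ‖E (uα α)‖ ^ 2 ≤ μ₀ * M α * Ns ^ 2 :=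
      le_trans (hlow α hα (E (uα α))) h1
    have h3 : ‖uα α‖ ^ 2 ≤ ‖E (uα α)‖ ^ 2 := by
      have := hE (uα α)
      nlinarith [norm_nonneg (uα α)]
    have hAm : 0 < A₀ * m α := mul_pos hA₀ hm
    have heq : (μ₀ / A₀) * (M α / m α) * Ns ^ 2 = (μ₀ * M α * Ns ^ 2) / (A₀ * m α) := by
      field_simp
    rw [heq, le_div_iff₀ hAm]
    nlinarith
  refine ⟨key, ?_⟩
  obtain ⟨Cr, hCr⟩ := hratio
  refine ⟨Real.sqrt ((μ₀ / A₀) * max Cr 0 * Ns ^ 2), fun α hα => ?_⟩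
  have h1 : ‖uα α‖ ^ 2 ≤ (μ₀ / A₀) * max Cr 0 * Ns ^ 2 := by
    refine (key α hα).trans ?_
    have : M α / m α ≤ max Cr 0 := le_max_of_le_left (hCr α hα)
    have hμA : 0 ≤ μ₀ / A₀ := le_of_lt (div_pos hμ₀ hA₀)
    have h4 := mul_le_mul_of_nonneg_left this hμA
    nlinarith [mul_le_mul_of_nonneg_right h4 (sq_nonneg Ns)]
  have := Real.sqrt_le_sqrt h1
  rwa [Real.sqrt_sq (norm_nonneg _)] at this
end
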